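/- Pair-collision bound on the simplex: Let q ≥ 1, N ≥ 1 and t ≥ 0 be integers. Then the number of ordered pairs (x, z) ∈ S_{q,N} × S_{q,N} with (1/2)∑_i |x_i − z_i| ≤ t is at most (t+1)·C(t+q−1, q−1)²·C(N+q−1, q−1). Equivalently, for X and Z independent uniform random vectors on S_{q,N}, P[(1/2)∑_i |X_i − Z_i| ≤ t] ≤ (t+1)·C(t+q−1, q−1)² / C(N+q−1, q−1). -/

import Mathlib

open scoped BigOperators Classical

/-!
A pair `(x, z)` of points of `S_{q,N}` is determined by `x` and the two truncated differences
`x - z` and `z - x`. Both differences have the same coordinate sum `d`, which is the distance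
`(1/2) ∑ |x_i - z_i|`; so the pairs at distance at most `t` inject into
`S_{q,N} × ⋃_{d ≤ t} S_{q,d} × S_{q,d}`, and `|S_{q,d}| ≤ C(t+q-1, q-1)` for `d ≤ t`.
-/

/-- The discrete simplex `S_{q,N}`: q-tuples of nonnegative integers summing to `N`. -/
def simplex (q N : ℕ) : Finset (Fin q → ℕ) := Finset.Nat.antidiagonalTuple q N

open Finset

lemma card_simplex_le (q n : ℕ) : #(simplex q n) ≤ (n + q - 1).choose (q - 1) := by
  cases q with
  | zero => simpa using Finset.card_le_univ (simplex 0 n)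
  | succ k =>
    rw [simplex, ← Finset.piAntidiag_univ_fin_eq_antidiagonalTuple, ← Finset.map_sym_eq_piAntidiag,
      Finset.card_map, Finset.sym_univ, Finset.card_univ, Sym.card_sym_eq_choose, Fintype.card_fin,
      show k + 1 + n - 1 = n + k by omega, Nat.choose_symm_add]
    simp

section TruncatedDifferences

variable {ι : Type*}

lemma eq_tsub_tsub_add_tsub (x z : ι → ℕ) : z = x - (x - z) + (z - x) := by
  ext i
  simp only [Pi.add_apply, Pi.sub_apply]
  omega

variable [Fintype ι]

lemma sum_tsub_comm_of_sum_eq {x z : ι → ℕ} (h : ∑ i, x i = ∑ i, z i) :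
    ∑ i, (x - z) i = ∑ i, (z - x) i := by
  -- both sides of `x_i + (z_i - x_i) = z_i + (x_i - z_i)` are `max x_i z_i`
  have hmax : ∑ i, x i + ∑ i, (z - x) i = ∑ i, z i + ∑ i, (x - z) i := by
    simp only [← Finset.sum_add_distrib, Pi.sub_apply]
    exact Finset.sum_congr rfl fun i _ => by omega
  omega

lemma abs_natCast_sub_natCast (a b : ℕ) : |(a : ℝ) - b| = ((a - b : ℕ) : ℝ) + ((b - a : ℕ) : ℝ) := by
  rcases le_total a b with h | h
  · rw [abs_sub_comm, abs_of_nonneg (sub_nonneg.2 (Nat.cast_le.2 h)), Nat.sub_eq_zero_of_le h,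
      Nat.cast_sub h]
    simp
  · rw [abs_of_nonneg (sub_nonneg.2 (Nat.cast_le.2 h)), Nat.sub_eq_zero_of_le h, Nat.cast_sub h]
    simp

lemma half_sum_abs_sub_eq_sum_tsub {x z : ι → ℕ} (h : ∑ i, x i = ∑ i, z i) :
    (∑ i, |(x i : ℝ) - (z i : ℝ)|) / 2 = ((∑ i, (x - z) i : ℕ) : ℝ) := by
  have hsum := congrArg (Nat.cast (R := ℝ)) (sum_tsub_comm_of_sum_eq h)
  simp only [abs_natCast_sub_natCast, Finset.sum_add_distrib, Nat.cast_sum, Pi.sub_apply] at hsum ⊢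
  linarith

end TruncatedDifferences

def equalSumPairs (q t : ℕ) : Finset ((Fin q → ℕ) × (Fin q → ℕ)) :=
  (range (t + 1)).biUnion fun d => simplex q d ×ˢ simplex q d

lemma card_equalSumPairs_le (q t : ℕ) :
    #(equalSumPairs q t) ≤ (t + 1) * ((t + q - 1).choose (q - 1)) ^ 2 := by
  refine card_biUnion_le.trans <| (sum_le_card_nsmul _ _ ((t + q - 1).choose (q - 1) ^ 2)
    fun d hd => ?_).trans_eq (by simp)
  rw [card_product, ← sq]
  exact Nat.pow_le_pow_left ((card_simplex_le q d).trans
    (Nat.choose_le_choose _ (by simp at hd; omega))) 2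

lemma card_filter_halfDist_le (q N t : ℕ) :
    #{p ∈ simplex q N ×ˢ simplex q N | (∑ i, |(p.1 i : ℝ) - (p.2 i : ℝ)|) / 2 ≤ (t : ℝ)} ≤
      #(simplex q N) * #(equalSumPairs q t) := by
  rw [← card_product]
  refine card_le_card_of_injOn (fun p => (p.1, p.1 - p.2, p.2 - p.1)) (fun p hp => ?_) ?_
  · simp only [coe_filter, mem_product, simplex, Nat.mem_antidiagonalTuple] at hp
    obtain ⟨⟨hx, hz⟩, hdist⟩ := hp
    have hsum : ∑ i, p.1 i = ∑ i, p.2 i := hx.trans hz.symm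
    rw [half_sum_abs_sub_eq_sum_tsub hsum, Nat.cast_le] at hdist
    simp only [coe_product, Set.mem_prod, mem_coe, equalSumPairs, mem_biUnion, mem_range,
      mem_product, simplex, Nat.mem_antidiagonalTuple]
    exact ⟨hx, _, Nat.lt_succ_of_le hdist, rfl, (sum_tsub_comm_of_sum_eq hsum).symm⟩
  · rintro ⟨x, z⟩ - ⟨x', z'⟩ - heq
    simp only [Prod.mk.injEq] at heq
    obtain ⟨rfl, hxz, hzx⟩ := heq
    refine Prod.ext rfl ?_
    rw [eq_tsub_tsub_add_tsub x z, eq_tsub_tsub_add_tsub x z', hxz, hzx]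

theorem simplex_pair_collision_bound_general (q N t : ℕ) :
    (((simplex q N) ×ˢ (simplex q N)).filter
        fun p => (∑ i, |(p.1 i : ℝ) - (p.2 i : ℝ)|) / 2 ≤ (t : ℝ)).card ≤
      (t + 1) * ((t + q - 1).choose (q - 1)) ^ 2 * (N + q - 1).choose (q - 1) := by
  calc _ ≤ #(simplex q N) * #(equalSumPairs q t) := card_filter_halfDist_le q N t
    _ ≤ (N + q - 1).choose (q - 1) * ((t + 1) * ((t + q - 1).choose (q - 1)) ^ 2) :=
        Nat.mul_le_mul (card_simplex_le q N) (card_equalSumPairs_le q t)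
    _ = _ := mul_comm _ _

/-- Pair-collision bound on the simplex: the number of ordered pairs `(x, z)` of points of
`S_{q,N}` at ℓ1-distance at most `t` from each other is at most
`(t+1) C(t+q-1, q-1)² C(N+q-1, q-1)`. -/
theorem simplex_pair_collision_bound (q N t : ℕ) (hq : 1 ≤ q) (hN : 1 ≤ N) :
    (((simplex q N) ×ˢ (simplex q N)).filter
        fun p => (∑ i, |(p.1 i : ℝ) - (p.2 i : ℝ)|) / 2 ≤ (t : ℝ)).card ≤
      (t + 1) * ((t + q - 1).choose (q - 1)) ^ 2 * (N + q - 1).choose (q - 1) :=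
  simplex_pair_collision_bound_general q N t
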